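/- arXiv:2310.09100 — 5 statements merged into one kernel-verified Lean document; each statement's English description precedes it below -/
import Mathlib

section
/- A CGF-like function ψ : [0, λ_max) → ℝ≥0 is super-Gaussian if and only if its convex conjugate ψ* is sub-Gaussian, i.e., u ↦ ψ*(u)/u² is non-increasing on the interior of its domain. -/
/-!
If `ψ(λ)/λ²` is non-decreasing then `ψ(tλ) ≤ t² ψ(λ)` for `t ≤ 1`; substituting `λ ↦ tλ` in the
supremum defining `ψ*` gives `t² ψ*(v) ≤ ψ*(tv)`, which is the monotonicity of `ψ*(u)/u²`.

Conversely, at `u = ψ'(λ)` the Fenchel equality `ψ*(u) = λu - ψ(λ)` holds, while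
`ψ*(v) ≥ λv - ψ(λ)` for all `v`. Comparing `ψ*(v)/v²` with `ψ*(u)/u²` as `v ↓ u` yields
`2ψ(λ) ≤ λψ'(λ)`, which is the sign of the derivative of `ψ(λ)/λ²`.
-/

open Set

def CGFLikeOn (ψ : ℝ → ℝ) (s : Set ℝ) : Prop :=
  s.Nonempty ∧ (∀ x ∈ s, 0 ≤ ψ x) ∧ ContDiffOn ℝ 2 ψ s ∧ StrictConvexOn ℝ s ψ ∧
    ψ 0 = 0 ∧ derivWithin ψ s 0 = 0 ∧ 0 < iteratedDerivWithin 2 ψ s 0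

def CGFLike (ψ : ℝ → ℝ) (lmax : ℝ) : Prop := CGFLikeOn ψ (Ico 0 lmax)

/-- `ψ` is super-Gaussian: `λ ↦ ψ(λ)/λ²` is non-decreasing on `(0, λ_max)`. -/
def SuperGaussian (ψ : ℝ → ℝ) (lmax : ℝ) : Prop :=
  ∀ x ∈ Ioo (0:ℝ) lmax, ∀ y ∈ Ioo (0:ℝ) lmax, x ≤ y → ψ x / x ^ 2 ≤ ψ y / y ^ 2

/-- The convex conjugate `ψ*(u) = sup_{λ ∈ [0, λ_max)} (uλ - ψ(λ))`. -/
noncomputable def psiStar (ψ : ℝ → ℝ) (lmax : ℝ) (u : ℝ) : ℝ :=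
  sSup ((fun l => u * l - ψ l) '' Ico 0 lmax)

/-- The domain `[0, u_max)` of the conjugate, where `u_max = sup_λ ψ'(λ)`. -/
def conjDomain (ψ : ℝ → ℝ) (lmax : ℝ) : Set ℝ :=
  {u : ℝ | 0 ≤ u ∧ ∃ l ∈ Ico (0:ℝ) lmax, u < derivWithin ψ (Ico 0 lmax) l}

open Filter Topology

theorem ConvexOn.add_derivWithin_mul_sub_le {S : Set ℝ} {f : ℝ → ℝ} (hf : ConvexOn ℝ S f)
    {x y : ℝ} (hx : x ∈ S) (hy : y ∈ S) (hfx : DifferentiableWithinAt ℝ f S x) :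
    f x + derivWithin f S x * (y - x) ≤ f y := by
  rcases lt_trichotomy x y with hxy | rfl | hyx
  · have h := hf.derivWithin_le_slope hx hy hxy hfx
    rw [slope_def_field, le_div_iff₀ (sub_pos.2 hxy)] at h
    linarith
  · simp
  · have h := hf.slope_le_derivWithin hy hx hyx hfx
    rw [slope_def_field, div_le_iff₀ (sub_pos.2 hyx)] at h
    linarith

theorem le_of_forall_mem_Ioo_le_add_mul {a b M c : ℝ} (hc : 0 < c)
    (h : ∀ t ∈ Ioo 0 c, a ≤ b + M * t) : a ≤ b := by
  have hlim : Tendsto (fun t => b + M * t) (𝓝[>] 0) (𝓝 b) := by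
    refine tendsto_nhdsWithin_of_tendsto_nhds ?_
    simpa using ((continuous_const.mul continuous_id).const_add b).tendsto (0 : ℝ)
  exact ge_of_tendsto hlim (eventually_of_mem (Ioo_mem_nhdsGT hc) h)

theorem monotoneOn_div_sq_of_two_mul_le {f f' : ℝ → ℝ} {a : ℝ}
    (hf : ∀ x ∈ Ioo 0 a, HasDerivAt f (f' x) x) (h : ∀ x ∈ Ioo 0 a, 2 * f x ≤ x * f' x) :
    MonotoneOn (fun x => f x / x ^ 2) (Ioo 0 a) := by
  have hquot : ∀ x ∈ Ioo 0 a,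
      HasDerivAt (fun x => f x / x ^ 2) ((f' x * x ^ 2 - f x * (2 * x)) / (x ^ 2) ^ 2) x := by
    intro x hx
    simpa using (hf x hx).fun_div (hasDerivAt_pow 2 x) (pow_ne_zero 2 hx.1.ne')
  refine monotoneOn_of_hasDerivWithinAt_nonneg (convex_Ioo 0 a)
    (fun x hx => (hquot x hx).continuousAt.continuousWithinAt)
    (fun x hx => (hquot x (interior_subset hx)).hasDerivWithinAt) fun x hx => ?_
  rw [interior_Ioo] at hx
  apply div_nonneg _ (by positivity)
  nlinarith [h x hx, hx.1]

section Conjugate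

variable {ψ : ℝ → ℝ} {lmax : ℝ}

theorem bddAbove_image_of_le_derivWithin (hψ : ConvexOn ℝ (Ico 0 lmax) ψ)
    (hd : DifferentiableOn ℝ ψ (Ico 0 lmax)) {u l₀ : ℝ} (hl₀ : l₀ ∈ Ico 0 lmax)
    (hu : u ≤ derivWithin ψ (Ico 0 lmax) l₀) :
    BddAbove ((fun l => u * l - ψ l) '' Ico 0 lmax) := by
  refine ⟨derivWithin ψ (Ico 0 lmax) l₀ * l₀ - ψ l₀, forall_mem_image.2 fun l hl => ?_⟩
  have htangent := hψ.add_derivWithin_mul_sub_le hl₀ hl (hd l₀ hl₀)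
  nlinarith [mul_le_mul_of_nonneg_right hu hl.1]

theorem le_psiStar (hψ : ConvexOn ℝ (Ico 0 lmax) ψ) (hd : DifferentiableOn ℝ ψ (Ico 0 lmax))
    {u l₀ l : ℝ} (hl₀ : l₀ ∈ Ico 0 lmax) (hu : u ≤ derivWithin ψ (Ico 0 lmax) l₀)
    (hl : l ∈ Ico 0 lmax) : u * l - ψ l ≤ psiStar ψ lmax u :=
  le_csSup (bddAbove_image_of_le_derivWithin hψ hd hl₀ hu) (mem_image_of_mem _ hl)

theorem psiStar_le (hlmax : 0 < lmax) {u c : ℝ} (h : ∀ l ∈ Ico 0 lmax, u * l - ψ l ≤ c) :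
    psiStar ψ lmax u ≤ c :=
  csSup_le ((nonempty_Ico.2 hlmax).image _) (forall_mem_image.2 h)

theorem psiStar_derivWithin (hψ : ConvexOn ℝ (Ico 0 lmax) ψ)
    (hd : DifferentiableOn ℝ ψ (Ico 0 lmax)) {l : ℝ} (hl : l ∈ Ico 0 lmax) :
    psiStar ψ lmax (derivWithin ψ (Ico 0 lmax) l) = derivWithin ψ (Ico 0 lmax) l * l - ψ l := by
  refine le_antisymm (psiStar_le (hl.1.trans_lt hl.2) fun l' hl' => ?_)
    (le_psiStar hψ hd hl le_rfl hl)
  have htangent := hψ.add_derivWithin_mul_sub_le hl hl' (hd l hl)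
  linarith

theorem interior_conjDomain_subset_Ioi : interior (conjDomain ψ lmax) ⊆ Ioi 0 := by
  rw [← interior_Ici]
  exact interior_mono fun _ hu => hu.1

theorem Ioo_subset_interior_conjDomain {l : ℝ} (hl : l ∈ Ico 0 lmax) :
    Ioo 0 (derivWithin ψ (Ico 0 lmax) l) ⊆ interior (conjDomain ψ lmax) :=
  interior_maximal (fun _ hu => ⟨hu.1.le, l, hl, hu.2⟩) isOpen_Ioo

theorem SuperGaussian.apply_mul_le (hsg : SuperGaussian ψ lmax) (h0 : ψ 0 = 0) {t l : ℝ}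
    (ht0 : 0 < t) (ht1 : t ≤ 1) (hl : l ∈ Ico 0 lmax) : ψ (t * l) ≤ t ^ 2 * ψ l := by
  rcases hl.1.eq_or_lt with rfl | hl0
  · simp [h0]
  have htl : t * l ≤ l := mul_le_of_le_one_left hl0.le ht1
  have hratio := hsg (t * l) ⟨mul_pos ht0 hl0, htl.trans_lt hl.2⟩ l ⟨hl0, hl.2⟩ htl
  rw [div_le_iff₀ (by positivity)] at hratio
  calc ψ (t * l) ≤ ψ l / l ^ 2 * (t * l) ^ 2 := hratio
    _ = t ^ 2 * ψ l := by field_simp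

theorem SuperGaussian.sq_mul_psiStar_le (hsg : SuperGaussian ψ lmax) (h0 : ψ 0 = 0)
    (hψ : ConvexOn ℝ (Ico 0 lmax) ψ) (hd : DifferentiableOn ℝ ψ (Ico 0 lmax)) (hlmax : 0 < lmax)
    {t v l₀ : ℝ} (ht0 : 0 < t) (ht1 : t ≤ 1) (hl₀ : l₀ ∈ Ico 0 lmax)
    (hv : t * v ≤ derivWithin ψ (Ico 0 lmax) l₀) :
    t ^ 2 * psiStar ψ lmax v ≤ psiStar ψ lmax (t * v) := by
  rw [mul_comm, ← le_div_iff₀ (by positivity)]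
  refine psiStar_le hlmax fun l hl => ?_
  rw [le_div_iff₀ (by positivity)]
  have htl : t * l ∈ Ico 0 lmax :=
    ⟨mul_nonneg ht0.le hl.1, (mul_le_of_le_one_left hl.1 ht1).trans_lt hl.2⟩
  calc (v * l - ψ l) * t ^ 2 ≤ t * v * (t * l) - ψ (t * l) := by
        nlinarith [hsg.apply_mul_le h0 ht0 ht1 hl]
    _ ≤ psiStar ψ lmax (t * v) := le_psiStar hψ hd hl₀ hv htl

theorem SuperGaussian.antitoneOn_psiStar_div_sq (hsg : SuperGaussian ψ lmax) (h0 : ψ 0 = 0)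
    (hψ : ConvexOn ℝ (Ico 0 lmax) ψ) (hd : DifferentiableOn ℝ ψ (Ico 0 lmax)) (hlmax : 0 < lmax) :
    AntitoneOn (fun u => psiStar ψ lmax u / u ^ 2) (interior (conjDomain ψ lmax)) := by
  intro u hu v hv huv
  have hu0 : 0 < u := interior_conjDomain_subset_Ioi hu
  have hv0 : 0 < v := interior_conjDomain_subset_Ioi hv
  obtain ⟨-, l₀, hl₀, hul₀⟩ := interior_subset hu
  have hscale := hsg.sq_mul_psiStar_le h0 hψ hd hlmax (t := u / v) (div_pos hu0 hv0)
    ((div_le_one hv0).2 huv) hl₀ (by rw [div_mul_cancel₀ u hv0.ne']; exact hul₀.le)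
  rw [div_mul_cancel₀ u hv0.ne', div_pow, div_mul_eq_mul_div, div_le_iff₀ (by positivity)]
    at hscale
  dsimp only
  rw [div_le_div_iff₀ (by positivity) (by positivity)]
  linarith

theorem two_mul_le_mul_derivWithin_of_antitoneOn (hψ : StrictConvexOn ℝ (Ico 0 lmax) ψ)
    (hd : DifferentiableOn ℝ ψ (Ico 0 lmax)) (hd0 : derivWithin ψ (Ico 0 lmax) 0 = 0)
    (hsub : AntitoneOn (fun u => psiStar ψ lmax u / u ^ 2) (interior (conjDomain ψ lmax)))
    {l : ℝ} (hl : l ∈ Ioo 0 lmax) : 2 * ψ l ≤ l * derivWithin ψ (Ico 0 lmax) l := by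
  have hmono := hψ.strictMonoOn_derivWithin hd
  have hl' : l ∈ Ico 0 lmax := Ioo_subset_Ico_self hl
  have hl₁ : (l + lmax) / 2 ∈ Ico 0 lmax := ⟨by linarith [hl.1, hl.2], by linarith [hl.2]⟩
  have hu0 : 0 < derivWithin ψ (Ico 0 lmax) l := by
    simpa [hd0] using hmono (left_mem_Ico.2 (hl.1.trans hl.2)) hl' hl.1
  have huc := hmono hl' hl₁ (by linarith [hl.2])
  set u := derivWithin ψ (Ico 0 lmax) l
  set c := derivWithin ψ (Ico 0 lmax) ((l + lmax) / 2)
  have hu : u ∈ interior (conjDomain ψ lmax) := Ioo_subset_interior_conjDomain hl₁ ⟨hu0, huc⟩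
  have hψu : psiStar ψ lmax u = u * l - ψ l := psiStar_derivWithin hψ.convexOn hd hl'
  -- compare `ψ*(u + h) / (u + h)²` with `ψ*(u) / u²` and let `h → 0⁺`
  have hstep : ∀ h ∈ Ioo 0 (c - u), l * u ^ 2 ≤ 2 * u * (u * l - ψ l) + (u * l - ψ l) * h := by
    intro h hh
    have hv : u + h ∈ interior (conjDomain ψ lmax) :=
      Ioo_subset_interior_conjDomain hl₁ ⟨by linarith [hh.1], by linarith [hh.2]⟩
    have hlow : (u + h) * l - ψ l ≤ psiStar ψ lmax (u + h) :=
      le_psiStar hψ.convexOn hd hl₁ (by linarith [hh.2]) hl'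
    have hratio := hsub hu hv (by linarith [hh.1])
    dsimp only at hratio
    rw [hψu, div_le_div_iff₀ (by nlinarith [hh.1]) (by positivity)] at hratio
    have hscaled : h * (l * u ^ 2) ≤ h * (2 * u * (u * l - ψ l) + (u * l - ψ l) * h) := by
      nlinarith [mul_le_mul_of_nonneg_right hlow (sq_nonneg u)]
    exact le_of_mul_le_mul_left hscaled hh.1
  have hlim := le_of_forall_mem_Ioo_le_add_mul (sub_pos.2 huc) hstep
  nlinarith

end Conjugate

/-- A CGF-like `ψ` is super-Gaussian iff its convex conjugate `ψ*` is sub-Gaussian, i.e.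
`u ↦ ψ*(u)/u²` is non-increasing on the interior of the domain `[0, u_max)` of `ψ*`. -/
theorem superGaussian_iff_conj_subGaussian (ψ : ℝ → ℝ) (lmax : ℝ) (h : CGFLike ψ lmax) :
    SuperGaussian ψ lmax ↔
      ∀ u ∈ interior (conjDomain ψ lmax), ∀ v ∈ interior (conjDomain ψ lmax),
        u ≤ v → psiStar ψ lmax v / v ^ 2 ≤ psiStar ψ lmax u / u ^ 2 := by
  obtain ⟨⟨l, hl⟩, -, hcd, hsc, h0, hd0, -⟩ := h
  have hlmax : 0 < lmax := hl.1.trans_lt hl.2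
  have hd : DifferentiableOn ℝ ψ (Ico 0 lmax) := hcd.differentiableOn (by norm_num)
  refine ⟨fun hsg => hsg.antitoneOn_psiStar_div_sq h0 hsc.convexOn hd hlmax, fun hsub => ?_⟩
  refine monotoneOn_div_sq_of_two_mul_le (fun x hx => ?_)
    (fun x hx => two_mul_le_mul_derivWithin_of_antitoneOn hsc hd hd0 hsub hx)
  exact (hd x (Ioo_subset_Ico_self hx)).hasDerivWithinAt.hasDerivAt (Ico_mem_nhds hx.1 hx.2)
end

section
/- For the sub-Gamma CGF-like function ψ_{G,c}(λ) = λ²/(2(1 - cλ)) defined on [0, 1/c) with c > 0, the inverse of the convex conjugate is (ψ_{G,c}*)^{-1}(x) = √(2x) + cx for all x ≥ 0. -/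
open Set

/-!
Parametrise the slopes by `u = s + c s² / 2` with `s ≥ 0`. Then
`s²/2 - (u λ - ψ(λ)) = (λ (1 + c s) - s)² / (2 (1 - c λ))`, so `ψ*(u) = s²/2`, attained at
`λ = s / (1 + c s)`. As `s ↦ u` is an increasing bijection of `[0, ∞)`, `ψ*` is strictly
increasing there, and `ψ*(u) = x` exactly for `s = √(2x)`, that is `u = √(2x) + c x`.
-/

lemma subGamma_conj_gap {c : ℝ} (s : ℝ) {l : ℝ} (hl : c * l < 1) :
    s ^ 2 / 2 - ((s + c * s ^ 2 / 2) * l - l ^ 2 / (2 * (1 - c * l)))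
      = (l * (1 + c * s) - s) ^ 2 / (2 * (1 - c * l)) := by
  have : 1 - c * l ≠ 0 := by linarith
  field_simp
  ring

lemma psiStar_subGamma_param {c : ℝ} (hc : 0 < c) {s : ℝ} (hs : 0 ≤ s) :
    psiStar (fun l => l ^ 2 / (2 * (1 - c * l))) (1 / c) (s + c * s ^ 2 / 2) = s ^ 2 / 2 := by
  refine IsGreatest.csSup_eq ⟨⟨s / (1 + c * s), ⟨by positivity, ?_⟩, ?_⟩, ?_⟩
  · rw [div_lt_div_iff₀ (by positivity) hc]
    linarith
  · have hl : c * (s / (1 + c * s)) < 1 := by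
      rw [mul_div_assoc', div_lt_one (by positivity)]
      linarith
    have hgap := subGamma_conj_gap s hl
    rw [div_mul_cancel₀ s (by positivity : 1 + c * s ≠ 0), sub_self,
      zero_pow two_ne_zero, zero_div] at hgap
    linarith
  · rintro _ ⟨l, ⟨-, hl⟩, rfl⟩
    have hl : c * l < 1 := by rwa [lt_div_iff₀' hc] at hl
    have hgap := subGamma_conj_gap s hl
    have : 0 ≤ (l * (1 + c * s) - s) ^ 2 / (2 * (1 - c * l)) := by
      have : 0 < 1 - c * l := by linarith
      positivity
    linarith

lemma surjOn_add_mul_sq_div_two {c : ℝ} (hc : 0 < c) :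
    SurjOn (fun s => s + c * s ^ 2 / 2) (Ici 0) (Ici 0) := by
  intro u (hu : 0 ≤ u)
  have h1 : 1 ≤ √(1 + 2 * c * u) := Real.one_le_sqrt.mpr (le_add_of_nonneg_right (by positivity))
  have hsq : √(1 + 2 * c * u) ^ 2 = 1 + 2 * c * u := Real.sq_sqrt (by positivity)
  refine ⟨(√(1 + 2 * c * u) - 1) / c, div_nonneg (by linarith) hc.le, ?_⟩
  field_simp
  linear_combination (exp := 1) hsq

lemma psiStar_subGamma_strictMonoOn {c : ℝ} (hc : 0 < c) :
    StrictMonoOn (psiStar (fun l => l ^ 2 / (2 * (1 - c * l))) (1 / c)) (Ici 0) := by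
  rintro _ ha _ hb hab
  obtain ⟨s, hs : 0 ≤ s, rfl⟩ := surjOn_add_mul_sq_div_two hc ha
  obtain ⟨r, hr : 0 ≤ r, rfl⟩ := surjOn_add_mul_sq_div_two hc hb
  rw [psiStar_subGamma_param hc hs, psiStar_subGamma_param hc hr]
  have hsr : s < r := by
    by_contra! hrs
    have : c * r ^ 2 ≤ c * s ^ 2 := by gcongr
    linarith
  gcongr

/-- For the sub-Gamma CGF-like function `ψ_{G,c}(λ) = λ²/(2(1 - cλ))` on `[0, 1/c)` with
`c > 0`, the inverse of the convex conjugate (the set-inverse of the strictly increasing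
conjugate on `[0, ∞)`) is `(ψ_{G,c}*)⁻¹(x) = √(2x) + cx` for all `x ≥ 0`. -/
theorem subGamma_conj_inv (c : ℝ) (hc : 0 < c) (x : ℝ) (hx : 0 ≤ x) :
    Function.invFunOn (psiStar (fun l => l ^ 2 / (2 * (1 - c * l))) (1 / c)) (Ici 0) x
      = Real.sqrt (2 * x) + c * x := by
  have hs : 0 ≤ √(2 * x) := Real.sqrt_nonneg _
  have hsq : √(2 * x) ^ 2 = 2 * x := Real.sq_sqrt (by positivity)
  have hu : √(2 * x) + c * x = √(2 * x) + c * √(2 * x) ^ 2 / 2 := by rw [hsq]; ring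
  have hconj : psiStar (fun l => l ^ 2 / (2 * (1 - c * l))) (1 / c) (√(2 * x) + c * x) = x := by
    rw [hu, psiStar_subGamma_param hc hs, hsq]
    ring
  have hmem : √(2 * x) + c * x ∈ Ici 0 := by
    rw [mem_Ici]
    positivity
  simpa only [hconj] using
    (psiStar_subGamma_strictMonoOn hc).injOn.leftInvOn_invFunOn hmem
end

section
/- For any α > 1, one has ((α^{1/4} + α^{-1/4})/√2)² ≤ 2α; moreover, for 1 < α < 2.06, one has 2α ≤ 2·((α^{1/4} + α^{-1/4})/√2)². -/
/-! Writing `u = √α`, the constant `((α^{1/4} + α^{-1/4})/√2)²` equals `(u + 1)² / (2u)`, so the two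
inequalities become the polynomial inequalities `(u + 1)² ≤ 4u³` for `u ≥ 1` and `2u³ ≤ (u + 1)²`
for `u² < 2.06`; the cubic `2u³ - (u + 1)²` has its positive root at `u ≈ 1.4375`, just above
`√2.06 ≈ 1.4353`. -/

open Real

lemma sq_rpow_quarter_add_rpow_neg_quarter_div_sqrt_two {x : ℝ} (hx : 0 < x) :
    ((x ^ ((1:ℝ)/4) + x ^ (-(1:ℝ)/4)) / √2) ^ 2 = (√x + 1) ^ 2 / (2 * √x) := by
  have hsqrt : √x = (x ^ ((1:ℝ)/4)) ^ 2 := by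
    rw [sqrt_eq_rpow, ← rpow_natCast, ← rpow_mul hx.le]
    norm_num
  rw [neg_div, rpow_neg hx.le, div_pow, sq_sqrt zero_le_two, hsqrt]
  field_simp

lemma sq_add_one_div_two_mul_le_two_mul_sq {u : ℝ} (hu : 1 ≤ u) :
    (u + 1) ^ 2 / (2 * u) ≤ 2 * u ^ 2 := by
  rw [div_le_iff₀ (by positivity)]
  nlinarith [mul_le_mul_of_nonneg_left hu (sq_nonneg (2 * u)), sq_nonneg (u - 1)]

lemma sq_le_sq_add_one_div_two_mul {u : ℝ} (hu : 0 < u) (hu2 : u ^ 2 < 2.06) :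
    u ^ 2 ≤ (u + 1) ^ 2 / (2 * u) := by
  rw [le_div_iff₀ (by positivity)]
  nlinarith [sq_nonneg (u - 1.06), mul_pos hu (sub_pos.2 hu2)]

/-- For any `α > 1`, `((α^{1/4} + α^{-1/4})/√2)² ≤ 2α`; moreover, for `1 < α < 2.06`,
`2α ≤ 2·((α^{1/4} + α^{-1/4})/√2)²`. -/
theorem stitching_constants (α : ℝ) (hα : 1 < α) :
    ((α ^ ((1:ℝ)/4) + α ^ (-(1:ℝ)/4)) / Real.sqrt 2) ^ 2 ≤ 2 * α ∧
      (α < 2.06 →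
        2 * α ≤ 2 * ((α ^ ((1:ℝ)/4) + α ^ (-(1:ℝ)/4)) / Real.sqrt 2) ^ 2) := by
  have hα0 : 0 < α := one_pos.trans hα
  have hsq : √α ^ 2 = α := sq_sqrt hα0.le
  rw [sq_rpow_quarter_add_rpow_neg_quarter_div_sqrt_two hα0]
  refine ⟨?_, fun hα2 => ?_⟩
  · simpa only [hsq] using sq_add_one_div_two_mul_le_two_mul_sq (one_le_sqrt.2 hα.le)
  · have h := sq_le_sq_add_one_div_two_mul (sqrt_pos.2 hα0) (by rwa [hsq])
    rw [hsq] at h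
    linarith
end

section
/- Let T be a symmetric positive-definite d×d matrix with condition number κ = γ_max(T)/γ_min(T). Let K be a proper ε-cover of the unit sphere S^{d-1} with projection map π : S^{d-1} → K satisfying ‖x - π(x)‖ ≤ ε for all x. For ν ∈ S^{d-1}, let ω be the unique unit vector with ν = T^{1/2}ω / ‖T^{1/2}ω‖, and set π_T(ν) := T^{1/2}π(ω) / ‖T^{1/2}π(ω)‖. Then ‖ν - π_T(ν)‖ ≤ √κ · ε. -/
/-! Put `a = T^{1/2} ω` and `b = T^{1/2} π(ω)`, so that `ν` and `π_T(ν)` are the normalizations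
of `a` and `b`. Since `‖T^{1/2} x‖² = xᵀ T x`, both `‖a‖²` and `‖b‖²` are at least `γ_min`, while
`‖a - b‖² = (ω - π ω)ᵀ T (ω - π ω) ≤ γ_max ε²`. The identity
`‖a - b‖² = (‖a‖ - ‖b‖)² + ‖a‖ ‖b‖ ‖a/‖a‖ - b/‖b‖‖²` then gives
`‖ν - π_T(ν)‖² ≤ ‖a - b‖² / (‖a‖ ‖b‖) ≤ γ_max ε² / γ_min`. -/

open Set Matrix

/-- The square root of a positive semidefinite matrix, as defined in the older Mathlib
(removed from the current one). -/
noncomputable def Matrix.PosSemidef.sqrt {n 𝕜 : Type*} [Fintype n] [RCLike 𝕜] [PartialOrder 𝕜]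
    [StarOrderedRing 𝕜] [DecidableEq n]
    {A : Matrix n n 𝕜} (hA : A.PosSemidef) : Matrix n n 𝕜 :=
  hA.1.eigenvectorUnitary.1 * diagonal ((↑) ∘ (√·) ∘ hA.1.eigenvalues) *
    (star hA.1.eigenvectorUnitary : Matrix n n 𝕜)

/-- Euclidean norm of a vector in `ℝ^d`. -/
noncomputable def enorm2 {d : ℕ} (v : Fin d → ℝ) : ℝ := Real.sqrt (∑ i, v i ^ 2)

lemma enorm2_eq_norm {d : ℕ} (v : Fin d → ℝ) :
    enorm2 v = ‖WithLp.toLp 2 v‖ := by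
  simp [enorm2, EuclideanSpace.norm_eq]

lemma enorm2_nonneg {d : ℕ} (v : Fin d → ℝ) : 0 ≤ enorm2 v := Real.sqrt_nonneg _

lemma enorm2_sq {d : ℕ} (v : Fin d → ℝ) : enorm2 v ^ 2 = v ⬝ᵥ v := by
  rw [enorm2_eq_norm, EuclideanSpace.real_norm_sq_eq]
  simp [dotProduct, sq]

namespace Matrix.PosSemidef

variable {n : Type*} [Fintype n] [DecidableEq n] {A : Matrix n n ℝ}

lemma transpose_sqrt (hA : A.PosSemidef) : hA.sqrtᵀ = hA.sqrt := by
  rw [← conjTranspose_eq_transpose_of_trivial]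
  simp [Matrix.PosSemidef.sqrt, Matrix.mul_assoc, Matrix.star_eq_conjTranspose]

lemma sqrt_mul_self (hA : A.PosSemidef) : hA.sqrt * hA.sqrt = A := by
  conv_rhs => rw [hA.1.spectral_theorem, Unitary.conjStarAlgAut_apply]
  have hU := Unitary.coe_star_mul_self hA.1.eigenvectorUnitary
  simp only [Matrix.PosSemidef.sqrt, Matrix.mul_assoc]
  rw [← Matrix.mul_assoc (star _) _ _, hU, Matrix.one_mul, ← Matrix.mul_assoc (diagonal _),
    diagonal_mul_diagonal]
  congr 3
  funext i
  simp [Real.mul_self_sqrt (hA.eigenvalues_nonneg i)]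

lemma sqrt_mulVec_dotProduct_sqrt_mulVec (hA : A.PosSemidef) (x : n → ℝ) :
    hA.sqrt *ᵥ x ⬝ᵥ hA.sqrt *ᵥ x = x ⬝ᵥ A *ᵥ x := by
  rw [dotProduct_mulVec, ← mulVec_transpose, transpose_sqrt, mulVec_mulVec, sqrt_mul_self,
    dotProduct_comm]

end Matrix.PosSemidef

lemma norm_normalize_sub_normalize_sq_mul_le {E : Type*} [NormedAddCommGroup E]
    [InnerProductSpace ℝ E] (a b : E) :
    ‖NormedSpace.normalize a - NormedSpace.normalize b‖ ^ 2 * (‖a‖ * ‖b‖) ≤ ‖a - b‖ ^ 2 := by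
  rcases eq_or_ne a 0 with rfl | ha
  · simp
  rcases eq_or_ne b 0 with rfl | hb
  · simp
  have ha' : 0 < ‖a‖ := norm_pos_iff.mpr ha
  have hb' : 0 < ‖b‖ := norm_pos_iff.mpr hb
  rw [norm_sub_sq_real, norm_sub_sq_real, NormedSpace.normalize, NormedSpace.normalize,
    inner_smul_left, inner_smul_right, norm_smul, norm_smul]
  simp only [norm_inv, norm_norm, RCLike.conj_to_real]
  field_simp
  nlinarith [sq_nonneg (‖a‖ - ‖b‖)]

lemma enorm2_normalize_sub_normalize_sq_mul_le {d : ℕ} (a b : Fin d → ℝ) :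
    enorm2 ((enorm2 a)⁻¹ • a - (enorm2 b)⁻¹ • b) ^ 2 * (enorm2 a * enorm2 b) ≤
      enorm2 (a - b) ^ 2 := by
  simpa only [enorm2_eq_norm, WithLp.toLp_sub, WithLp.toLp_smul, NormedSpace.normalize]
    using norm_normalize_sub_normalize_sq_mul_le (WithLp.toLp 2 a) (WithLp.toLp 2 b)

lemma le_sqrt_div_mul_of_sq_mul_le {x c C ε : ℝ} (hx : 0 ≤ x) (hc : 0 < c) (hε : 0 ≤ ε)
    (h : x ^ 2 * c ≤ C * ε ^ 2) : x ≤ √(C / c) * ε := by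
  rw [← Real.sqrt_sq hx, ← Real.sqrt_sq hε, ← Real.sqrt_mul' _ (sq_nonneg ε)]
  gcongr
  rwa [div_mul_eq_mul_div, le_div_iff₀ hc]

theorem cover_distortion_general {d : ℕ} (T : Matrix (Fin d) (Fin d) ℝ) (hT : T.PosDef)
    (γmax γmin : ℝ) (hγmin : 0 < γmin)
    (hmax : ∀ v : Fin d → ℝ, v ⬝ᵥ T.mulVec v ≤ γmax * enorm2 v ^ 2)
    (hmin : ∀ v : Fin d → ℝ, γmin * enorm2 v ^ 2 ≤ v ⬝ᵥ T.mulVec v)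
    (ε : ℝ)
    (K : Set (Fin d → ℝ)) (hK : K ⊆ {x | enorm2 x = 1})
    (π : (Fin d → ℝ) → (Fin d → ℝ))
    (hπ : ∀ x : Fin d → ℝ, enorm2 x = 1 → π x ∈ K ∧ enorm2 (x - π x) ≤ ε)
    (ν ω : Fin d → ℝ) (hω : enorm2 ω = 1)
    (hν : ν = (enorm2 (hT.posSemidef.sqrt.mulVec ω))⁻¹ • hT.posSemidef.sqrt.mulVec ω) :
    enorm2 (ν - (enorm2 (hT.posSemidef.sqrt.mulVec (π ω)))⁻¹ •
        hT.posSemidef.sqrt.mulVec (π ω))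
      ≤ Real.sqrt (γmax / γmin) * ε := by
  set S := hT.posSemidef.sqrt
  obtain ⟨hπK, hπε⟩ := hπ ω hω
  have hπω : enorm2 (π ω) = 1 := hK hπK
  have hS : ∀ x, enorm2 (S *ᵥ x) ^ 2 = x ⬝ᵥ T *ᵥ x := fun x ↦ by
    rw [enorm2_sq, hT.posSemidef.sqrt_mulVec_dotProduct_sqrt_mulVec]
  have hγmax : 0 ≤ γmax := by
    have := (hmin ω).trans (hmax ω)
    rw [hω] at this
    linarith
  have hSω : γmin ≤ enorm2 (S *ᵥ ω) ^ 2 := by simpa [hS, hω] using hmin ω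
  have hSπω : γmin ≤ enorm2 (S *ᵥ π ω) ^ 2 := by simpa [hS, hπω] using hmin (π ω)
  have hprod : γmin ≤ enorm2 (S *ᵥ ω) * enorm2 (S *ᵥ π ω) := by
    refine le_of_pow_le_pow_left₀ two_ne_zero (mul_nonneg (enorm2_nonneg _) (enorm2_nonneg _)) ?_
    rw [mul_pow, sq]
    exact mul_le_mul hSω hSπω hγmin.le (sq_nonneg _)
  have hdiff : enorm2 (S *ᵥ ω - S *ᵥ π ω) ^ 2 ≤ γmax * ε ^ 2 :=
    calc enorm2 (S *ᵥ ω - S *ᵥ π ω) ^ 2 ≤ γmax * enorm2 (ω - π ω) ^ 2 := by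
          rw [← mulVec_sub, hS]; exact hmax _
      _ ≤ γmax * ε ^ 2 := by gcongr; exact enorm2_nonneg _
  subst hν
  refine le_sqrt_div_mul_of_sq_mul_le (enorm2_nonneg _) hγmin ((enorm2_nonneg _).trans hπε) ?_
  exact (mul_le_mul_of_nonneg_left hprod (sq_nonneg _)).trans
    ((enorm2_normalize_sub_normalize_sq_mul_le _ _).trans hdiff)

/-- Lemma on covers distorted by a positive-definite matrix: if `K` is a proper `ε`-cover of
the unit sphere with projection `π`, `T` is positive definite with `γ_min ‖v‖² ≤ vᵀTv ≤
γ_max ‖v‖²` (so condition number `κ = γ_max/γ_min`), `ν = T^{1/2}ω/‖T^{1/2}ω‖`, and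
`π_T(ν) = T^{1/2}π(ω)/‖T^{1/2}π(ω)‖`, then `‖ν - π_T(ν)‖ ≤ √κ ε`. -/
theorem cover_distortion {d : ℕ} (T : Matrix (Fin d) (Fin d) ℝ) (hT : T.PosDef)
    (γmax γmin : ℝ) (hγmin : 0 < γmin)
    (hmax : ∀ v : Fin d → ℝ, v ⬝ᵥ T.mulVec v ≤ γmax * enorm2 v ^ 2)
    (hmin : ∀ v : Fin d → ℝ, γmin * enorm2 v ^ 2 ≤ v ⬝ᵥ T.mulVec v)
    (ε : ℝ) (hε : 0 < ε)
    (K : Set (Fin d → ℝ)) (hK : K ⊆ {x | enorm2 x = 1})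
    (π : (Fin d → ℝ) → (Fin d → ℝ))
    (hπ : ∀ x : Fin d → ℝ, enorm2 x = 1 → π x ∈ K ∧ enorm2 (x - π x) ≤ ε)
    (ν ω : Fin d → ℝ) (hω : enorm2 ω = 1)
    (hν : ν = (enorm2 (hT.posSemidef.sqrt.mulVec ω))⁻¹ • hT.posSemidef.sqrt.mulVec ω) :
    enorm2 (ν - (enorm2 (hT.posSemidef.sqrt.mulVec (π ω)))⁻¹ •
        hT.posSemidef.sqrt.mulVec (π ω))
      ≤ Real.sqrt (γmax / γmin) * ε :=
  cover_distortion_general T hT γmax γmin hγmin hmax hmin ε K hK π hπ ν ω hω hν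
end

section
/- Let (X_t)_{t≥1} be real random variables adapted to a filtration with |X_t| ≤ 1/2 almost surely, and let μ̂_t := (1/t)Σ_{s≤t}X_s (with μ̂_0 := 0). Then for any λ ∈ [0, 1), the process L_t^λ := exp{λ Σ_{s≤t}(X_s − E_{s-1}X_s) − ψ_{E,1}(λ) Σ_{s≤t}(X_s − μ̂_{s-1})²} is a nonnegative supermartingale, where ψ_{E,1}(λ) = −log(1−λ) − λ. -/
/-!
Write the increment of `log L` at step `t` as `l (μ̂_{t-1} - E_{t-1} X_t) + (l y - ψ y²)` with
`y = X_t - μ̂_{t-1} ≥ -1`. The first term is predictable, and the Fan–Grama–Liu inequality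
`exp (l y - ψ y²) ≤ 1 + l y` bounds the conditional expectation of the exponential of the second
by `1 + l (E_{t-1} X_t - μ̂_{t-1})`; so the one-step factor has conditional expectation at most
`exp z * (1 - z) ≤ 1` with `z = l (μ̂_{t-1} - E_{t-1} X_t)`. The inequality itself holds because
`log (1 + l y) - l y + ψ y²` vanishes at `y = 0` and `y = -1`, and `2ψ ≥ l²` controls the sign of
its derivative.
-/

open Set MeasureTheory Finset

/-- Running sample mean `μ̂_t = (1/t) Σ_{s ≤ t} X_s`, with `μ̂_0 = 0`. -/
noncomputable def sampleMean {Ω : Type*} (X : ℕ → Ω → ℝ) (t : ℕ) (ω : Ω) : ℝ :=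
  if t = 0 then 0 else (t : ℝ)⁻¹ * ∑ s ∈ Icc 1 t, X s ω

noncomputable def psiE (l : ℝ) : ℝ := -Real.log (1 - l) - l

lemma sq_div_two_le_psiE {l : ℝ} (h0 : 0 ≤ l) (h1 : l < 1) : l ^ 2 / 2 ≤ psiE l := by
  have hsum := Real.hasSum_pow_div_log_of_abs_lt_one (by rwa [abs_of_nonneg h0])
  have := sum_le_hasSum (range 2) (fun n _ => by positivity) hsum
  norm_num [sum_range_succ] at this
  unfold psiE
  linarith

lemma psiE_nonneg {l : ℝ} (h0 : 0 ≤ l) (h1 : l < 1) : 0 ≤ psiE l :=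
  (sq_div_two_le_psiE h0 h1).trans' (by positivity)

lemma le_of_hasDerivAt_nonneg {f f' : ℝ → ℝ} {a b : ℝ} (hab : a ≤ b)
    (hf : ∀ x ∈ Icc a b, HasDerivAt f (f' x) x) (hf' : ∀ x ∈ Ioo a b, 0 ≤ f' x) : f a ≤ f b := by
  refine monotoneOn_of_hasDerivWithinAt_nonneg (f' := f') (convex_Icc a b)
    (fun x hx => (hf x hx).continuousAt.continuousWithinAt) (fun x hx => ?_) (fun x hx => ?_)
    (left_mem_Icc.2 hab) (right_mem_Icc.2 hab) hab
  · rw [interior_Icc] at hx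
    exact (hf x (Ioo_subset_Icc_self hx)).hasDerivWithinAt
  · rw [interior_Icc] at hx
    exact hf' x hx

noncomputable def fglSlack (l y : ℝ) : ℝ := Real.log (1 + l * y) - l * y + psiE l * y ^ 2

lemma hasDerivAt_fglSlack {l x : ℝ} (hx : 1 + l * x ≠ 0) :
    HasDerivAt (fglSlack l) (x * (2 * psiE l - l ^ 2 / (1 + l * x))) x := by
  have hlin : HasDerivAt (fun y => 1 + l * y) l x := by
    simpa using ((hasDerivAt_id x).const_mul l).const_add 1
  have h := ((hlin.log hx).sub ((hasDerivAt_id' x).const_mul l)).add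
    ((hasDerivAt_pow 2 x).const_mul (psiE l))
  exact h.congr_deriv (by field_simp; ring)

lemma fglSlack_zero (l : ℝ) : fglSlack l 0 = 0 := by simp [fglSlack]

lemma fglSlack_neg_one (l : ℝ) : fglSlack l (-1) = 0 := by
  simp only [fglSlack, mul_neg, mul_one, sub_eq_add_neg, neg_neg, psiE, even_two, Even.neg_pow,
    one_pow]
  ring

lemma fglSlack_nonneg {l y : ℝ} (h0 : 0 ≤ l) (h1 : l < 1) (hy : -1 ≤ y) : 0 ≤ fglSlack l y := by
  have hpos : ∀ x, -1 ≤ x → 0 < 1 + l * x := fun x hx => by nlinarith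
  have hderiv : ∀ x, -1 ≤ x → HasDerivAt (fglSlack l) _ x :=
    fun x hx => hasDerivAt_fglSlack (hpos x hx).ne'
  -- The derivative is `x * Q x` with `Q` increasing and `Q 0 ≥ 0`: on `[0, y]` it is nonnegative,
  -- and on `[-1, 0]`, where the slack vanishes at both ends, it is first `≥ 0`, then `≤ 0`.
  have hQ : ∀ x z, -1 ≤ x → x ≤ z →
      2 * psiE l - l ^ 2 / (1 + l * x) ≤ 2 * psiE l - l ^ 2 / (1 + l * z) := by
    intro x z hx hxz
    gcongr
    exact hpos x hx
  have hQ0 : 0 ≤ 2 * psiE l - l ^ 2 / (1 + l * 0) := by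
    have := sq_div_two_le_psiE h0 h1
    simp only [mul_zero, add_zero, div_one]
    linarith
  rcases le_total 0 y with hy0 | hy0
  · rw [← fglSlack_zero l]
    exact le_of_hasDerivAt_nonneg hy0 (fun x hx => hderiv x (by linarith [hx.1]))
      (fun x hx => mul_nonneg hx.1.le (hQ0.trans (hQ 0 x (by norm_num) hx.1.le)))
  rcases le_total 0 (2 * psiE l - l ^ 2 / (1 + l * y)) with hQy | hQy
  · rw [← fglSlack_zero l, ← neg_le_neg_iff]
    exact le_of_hasDerivAt_nonneg (f := fun x => -fglSlack l x) hy0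
      (fun x hx => (hderiv x (by linarith [hx.1])).neg)
      (fun x hx => by
        have := hQy.trans (hQ y x hy hx.1.le)
        nlinarith [hx.2])
  · rw [← fglSlack_neg_one l]
    exact le_of_hasDerivAt_nonneg hy (fun x hx => hderiv x hx.1)
      (fun x hx => by
        have := (hQ x y hx.1.le hx.2.le).trans hQy
        nlinarith [hx.2])

lemma exp_mul_sub_psiE_mul_sq_le {l y : ℝ} (h0 : 0 ≤ l) (h1 : l < 1) (hy : -1 ≤ y) :
    Real.exp (l * y - psiE l * y ^ 2) ≤ 1 + l * y := by
  have hslack := fglSlack_nonneg h0 h1 hy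
  rw [fglSlack] at hslack
  calc Real.exp (l * y - psiE l * y ^ 2) ≤ Real.exp (Real.log (1 + l * y)) :=
        Real.exp_le_exp.2 (by linarith)
    _ = 1 + l * y := Real.exp_log (by nlinarith)

section Conditional

variable {Ω : Type*} {m m0 : MeasurableSpace Ω} {μ : Measure Ω} [IsFiniteMeasure μ]

lemma integrable_exp_of_ae_le {f : Ω → ℝ} (hf : AEStronglyMeasurable f μ) {C : ℝ}
    (hC : ∀ᵐ ω ∂μ, f ω ≤ C) : Integrable (fun ω => Real.exp (f ω)) μ :=
  Integrable.of_bound (Real.continuous_exp.comp_aestronglyMeasurable hf) (Real.exp C)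
    (by filter_upwards [hC] with ω hω using by simpa [Real.norm_eq_abs] using hω)

lemma condExp_one_add_mul_sub (hm : m ≤ m0) {Y a : Ω → ℝ} (l : ℝ) (hY : Integrable Y μ)
    (ha : StronglyMeasurable[m] a) (hai : Integrable a μ) :
    μ[fun ω => 1 + l * (Y ω - a ω) | m] =ᵐ[μ] fun ω => 1 + l * (μ[Y | m] ω - a ω) := by
  have hsplit : (fun ω => 1 + l * (Y ω - a ω)) = (fun ω => 1 - l * a ω) + l • Y := by
    funext ω; simp only [Pi.add_apply, Pi.smul_apply, smul_eq_mul]; ring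
  have hint : Integrable (fun ω => 1 - l * a ω) μ := (integrable_const 1).sub (hai.const_mul l)
  have hconst : μ[fun ω => 1 - l * a ω | m] = fun ω => 1 - l * a ω :=
    condExp_of_stronglyMeasurable hm (stronglyMeasurable_const.sub (ha.const_mul l)) hint
  rw [hsplit]
  filter_upwards [condExp_add hint (hY.smul l) m,
    condExp_smul (m := m) (μ := μ) l Y] with ω hadd hsmul
  simp only [hadd, hconst, Pi.add_apply, hsmul, Pi.smul_apply, smul_eq_mul]
  ring

lemma condExp_exp_centered_sub_psiE_mul_sq_le_one (hm : m ≤ m0) {l : ℝ} (h0 : 0 ≤ l)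
    (h1 : l < 1) {Y a : Ω → ℝ} (hY : StronglyMeasurable[m0] Y) (ha : StronglyMeasurable[m] a)
    (hYb : ∀ᵐ ω ∂μ, |Y ω| ≤ 1 / 2) (hab : ∀ᵐ ω ∂μ, |a ω| ≤ 1 / 2) :
    μ[fun ω => Real.exp (l * (Y ω - μ[Y | m] ω) - psiE l * (Y ω - a ω) ^ 2) | m] ≤ᵐ[μ] 1 := by
  set c := μ[Y | m]
  have hcb : ∀ᵐ ω ∂μ, |c ω| ≤ 1 / 2 := ae_bdd_abs_condExp_of_ae_bdd_abs hYb
  have hYi : Integrable Y μ := Integrable.of_bound hY.aestronglyMeasurable _ hYb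
  have hai : Integrable a μ := Integrable.of_bound (ha.mono hm).aestronglyMeasurable _ hab
  have hψ := psiE_nonneg h0 h1
  set E : Ω → ℝ := fun ω => Real.exp (l * (a ω - c ω))
  set K : Ω → ℝ := fun ω => Real.exp (l * (Y ω - a ω) - psiE l * (Y ω - a ω) ^ 2)
  -- Centre at the predictable `a`: the factor `E` is `m`-measurable and pulls out.
  have hsplit : (fun ω => Real.exp (l * (Y ω - c ω) - psiE l * (Y ω - a ω) ^ 2)) = E * K := by
    funext ω
    rw [Pi.mul_apply, ← Real.exp_add]
    ring_nf
  have hE : StronglyMeasurable[m] E :=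
    Real.continuous_exp.comp_stronglyMeasurable ((ha.sub stronglyMeasurable_condExp).const_mul l)
  have hYa : StronglyMeasurable[m0] (fun ω => Y ω - a ω) := hY.sub (ha.mono hm)
  have hKi : Integrable K μ := by
    refine integrable_exp_of_ae_le
      ((hYa.const_mul l).sub ((hYa.pow 2).const_mul _)).aestronglyMeasurable (C := l) ?_
    filter_upwards [hYb, hab] with ω hY hA
    have := abs_le.1 hY; have := abs_le.1 hA
    nlinarith [mul_nonneg hψ (sq_nonneg (Y ω - a ω))]
  have hEKi : Integrable (E * K) μ := by
    rw [← hsplit]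
    refine integrable_exp_of_ae_le (((hY.sub (stronglyMeasurable_condExp.mono hm)).const_mul l).sub
      ((hYa.pow 2).const_mul _)).aestronglyMeasurable (C := l) ?_
    filter_upwards [hYb, hcb] with ω hY hC
    have := abs_le.1 hY; have := abs_le.1 hC
    nlinarith [mul_nonneg hψ (sq_nonneg (Y ω - a ω))]
  have hWi : Integrable (fun ω => 1 + l * (Y ω - a ω)) μ :=
    (integrable_const 1).add ((hYi.sub hai).const_mul l)
  have hKW : K ≤ᵐ[μ] fun ω => 1 + l * (Y ω - a ω) := by
    filter_upwards [hYb, hab] with ω hY hA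
    have := abs_le.1 hY; have := abs_le.1 hA
    exact exp_mul_sub_psiE_mul_sq_le h0 h1 (by linarith)
  filter_upwards [condExp_mul_of_stronglyMeasurable_left hE hEKi hKi, condExp_mono hKi hWi hKW,
    condExp_one_add_mul_sub hm l hYi ha hai] with ω hpull hmono hW
  rw [hsplit, hpull, Pi.mul_apply, Pi.one_apply]
  calc E ω * μ[K | m] ω ≤ E ω * (1 + l * (c ω - a ω)) :=
        mul_le_mul_of_nonneg_left (hmono.trans_eq hW) (Real.exp_pos _).le
    _ ≤ E ω * Real.exp (l * (c ω - a ω)) := by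
        gcongr
        linarith [Real.add_one_le_exp (l * (c ω - a ω))]
    _ = 1 := by rw [← Real.exp_add]; ring_nf; exact Real.exp_zero

end Conditional

lemma supermartingale_exp_sum {Ω : Type*} {m0 : MeasurableSpace Ω} {μ : Measure Ω}
    [IsFiniteMeasure μ] {ℱ : Filtration ℕ m0} {Z : ℕ → Ω → ℝ} (hZ : StronglyAdapted ℱ Z) {C : ℝ}
    (hZC : ∀ s, 1 ≤ s → ∀ᵐ ω ∂μ, Z s ω ≤ C)
    (hstep : ∀ t, μ[fun ω => Real.exp (Z (t + 1) ω) | ℱ t] ≤ᵐ[μ] 1) :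
    Supermartingale (fun t ω => Real.exp (∑ s ∈ Icc 1 t, Z s ω)) ℱ μ := by
  set L : ℕ → Ω → ℝ := fun t ω => Real.exp (∑ s ∈ Icc 1 t, Z s ω)
  have hsum : ∀ t, StronglyMeasurable[ℱ t] fun ω => ∑ s ∈ Icc 1 t, Z s ω := fun t =>
    stronglyMeasurable_fun_sum _ fun s hs => (hZ s).mono (ℱ.mono (mem_Icc.1 hs).2)
  have hadapted : StronglyAdapted ℱ L := fun t =>
    Real.continuous_exp.comp_stronglyMeasurable (hsum t)
  have hint : ∀ t, Integrable (L t) μ := by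
    intro t
    refine integrable_exp_of_ae_le ((hsum t).mono (ℱ.le t)).aestronglyMeasurable (C := t * C) ?_
    filter_upwards [(Filter.eventually_all_finset _).2 fun s hs => hZC s (mem_Icc.1 hs).1]
      with ω hω
    calc ∑ s ∈ Icc 1 t, Z s ω ≤ ∑ s ∈ Icc 1 t, C := sum_le_sum hω
      _ = t * C := by simp
  refine supermartingale_nat hadapted hint fun t => ?_
  have hmul : L (t + 1) = L t * fun ω => Real.exp (Z (t + 1) ω) := by
    funext ω
    simp only [L, Pi.mul_apply, sum_Icc_succ_top (Nat.le_add_left 1 t), Real.exp_add]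
  have hDi : Integrable (fun ω => Real.exp (Z (t + 1) ω)) μ :=
    integrable_exp_of_ae_le ((hZ (t + 1)).mono (ℱ.le _)).aestronglyMeasurable
      (hZC (t + 1) (Nat.le_add_left 1 t))
  filter_upwards [condExp_mul_of_stronglyMeasurable_left (hadapted t) (hmul ▸ hint (t + 1)) hDi,
    hstep t] with ω hpull hD
  rw [hmul, hpull, Pi.mul_apply]
  exact mul_le_of_le_one_right (Real.exp_pos _).le hD

section SampleMean

variable {Ω : Type*} {X : ℕ → Ω → ℝ}

lemma stronglyMeasurable_sampleMean {m0 : MeasurableSpace Ω} {ℱ : Filtration ℕ m0}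
    (hX : StronglyAdapted ℱ X) (t : ℕ) : StronglyMeasurable[ℱ t] (sampleMean X t) := by
  unfold sampleMean
  by_cases ht : t = 0
  · simp only [ht, if_true]
    exact stronglyMeasurable_const
  · simp only [ht, if_false]
    exact (stronglyMeasurable_fun_sum _ fun s hs =>
      (hX s).mono (ℱ.mono (mem_Icc.1 hs).2)).const_mul _

lemma abs_sampleMean_le {t : ℕ} {ω : Ω} {c : ℝ} (hc : 0 ≤ c)
    (h : ∀ s ∈ Finset.Icc 1 t, |X s ω| ≤ c) : |sampleMean X t ω| ≤ c := by
  rcases eq_or_ne t 0 with rfl | ht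
  · simpa [sampleMean] using hc
  rw [sampleMean, if_neg ht, abs_mul, abs_inv, Nat.abs_cast,
    inv_mul_le_iff₀ (by positivity)]
  calc |∑ s ∈ Icc 1 t, X s ω| ≤ ∑ s ∈ Icc 1 t, |X s ω| := abs_sum_le_sum_abs _ _
    _ ≤ ∑ s ∈ Icc 1 t, c := sum_le_sum h
    _ = t * c := by simp

end SampleMean

/-- Fan–Grama–Liu / empirical Bernstein supermartingale: if `|X_t| ≤ 1/2` a.s., then for
any `λ ∈ [0, 1)`,
`L_t^λ = exp(λ Σ_{s≤t}(X_s − E_{s-1}X_s) − ψ_{E,1}(λ) Σ_{s≤t}(X_s − μ̂_{s-1})²)`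
is a nonnegative supermartingale, where `ψ_{E,1}(λ) = −log(1−λ) − λ`. -/
theorem empirical_bernstein_supermartingale {Ω : Type*} {m : MeasurableSpace Ω}
    (μ : Measure Ω) [IsProbabilityMeasure μ] (ℱ : Filtration ℕ m)
    (X : ℕ → Ω → ℝ) (hX : Adapted ℱ X)
    (hbdd : ∀ t : ℕ, 1 ≤ t → ∀ᵐ ω ∂μ, |X t ω| ≤ 1 / 2)
    (l : ℝ) (hl : l ∈ Ico (0:ℝ) 1) :
    Supermartingale
      (fun t ω => Real.exp
        (l * ∑ s ∈ Icc 1 t, (X s ω - (μ[X s | ℱ (s - 1)]) ω)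
          - (-Real.log (1 - l) - l) *
              ∑ s ∈ Icc 1 t, (X s ω - sampleMean X (s - 1) ω) ^ 2))
      ℱ μ := by
  obtain ⟨hl0, hl1⟩ := hl
  have hXs : StronglyAdapted ℱ X := hX.stronglyAdapted
  have hmean : ∀ t, ∀ᵐ ω ∂μ, |sampleMean X t ω| ≤ 1 / 2 := fun t => by
    filter_upwards [(Filter.eventually_all_finset (Icc 1 t)).2 fun s hs => hbdd s (mem_Icc.1 hs).1]
      with ω hω using abs_sampleMean_le (by norm_num) hω
  simp only [mul_sum, ← sum_sub_distrib, show -Real.log (1 - l) - l = psiE l from rfl]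
  refine supermartingale_exp_sum (C := l) (fun s => ?_) (fun s hs => ?_) (fun t => ?_)
  · have hpast : ℱ (s - 1) ≤ ℱ s := ℱ.mono (Nat.sub_le s 1)
    exact (((hXs s).sub (stronglyMeasurable_condExp.mono hpast)).const_mul l).sub
      ((((hXs s).sub ((stronglyMeasurable_sampleMean hXs (s - 1)).mono hpast)).pow 2).const_mul _)
  · filter_upwards [hbdd s hs, ae_bdd_abs_condExp_of_ae_bdd_abs (m := ℱ (s - 1)) (hbdd s hs)]
      with ω hXω hcω
    have := abs_le.1 hXω; have := abs_le.1 hcω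
    nlinarith [mul_nonneg (psiE_nonneg hl0 hl1) (sq_nonneg (X s ω - sampleMean X (s - 1) ω))]
  · simpa only [Nat.add_sub_cancel] using condExp_exp_centered_sub_psiE_mul_sq_le_one (ℱ.le t)
      hl0 hl1 ((hXs (t + 1)).mono (ℱ.le _)) (stronglyMeasurable_sampleMean hXs t)
      (hbdd (t + 1) (Nat.le_add_left 1 t)) (hmean t)
end
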